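/- arXiv:2508.01931 — 3 statements merged into one kernel-verified Lean document; each statement's English description precedes it below -/
import Mathlib

section
/- In the migration model, if initially loc n g = gt g for all n and g, then after any finite sequence of migrations, for each node n, the set of granules g on which loc n g differs from gt g is a subset of the set of granules that were migrated away from or through other nodes; in particular, loc n g = gt g whenever granule g was never involved in a migration step whose source and destination both differ from n. -/
structure MigState (G N : Type*) where
  gt : G → N
  loc : N → G → N

variable {G N : Type*} [DecidableEq G] [DecidableEq N]

/-- Apply migration of granule `g` from node `s` to node `d`. -/
def applyMig (g : G) (s d : N) (σ : MigState G N) : MigState G N where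
  gt := Function.update σ.gt g d
  loc := fun n =>
    if n = s ∨ n = d then Function.update (σ.loc n) g d else σ.loc n

/-- `Run σ L σ'`: executing the list of migration steps `L` (each `(g, s, d)` with
precondition `gt g = s`) from state `σ` yields `σ'`. -/
inductive Run : MigState G N → List (G × N × N) → MigState G N → Prop
  | nil (σ : MigState G N) : Run σ [] σ
  | cons {σ σ' : MigState G N} {g : G} {s d : N} {L : List (G × N × N)}
      (hpre : σ.gt g = s) (h : Run (applyMig g s d σ) L σ') :
      Run σ ((g, s, d) :: L) σ'


lemma key {G N : Type*} [DecidableEq G] [DecidableEq N]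
    {σ σ' : MigState G N} {L : List (G × N × N)} (hrun : Run σ L σ') (n : N) :
    ∀ g : G, σ.loc n g = σ.gt g →
      (∀ t ∈ L, t.1 = g → t.2.1 = n ∨ t.2.2 = n) → σ'.loc n g = σ'.gt g := by
  induction hrun with
  | nil => exact fun g h _ => h
  | cons hpre h ih =>
    rename_i σ σ' g' s d L
    intro g heq hall
    refine ih g ?_ (fun t ht => hall t (List.mem_cons_of_mem _ ht))
    by_cases hg : g' = g
    · subst hg
      rcases hall (g', s, d) List.mem_cons_self rfl with h1 | h1 <;>
        (simp only at h1; subst h1; simp [applyMig])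
    · have hne : g ≠ g' := fun h => hg h.symm
      simp only [applyMig]
      rw [Function.update_of_ne hne]
      split
      · rw [Function.update_of_ne hne]; exact heq
      · exact heq

theorem divergence_confined {G N : Type*} [DecidableEq G] [DecidableEq N]
    (σ₀ σ : MigState G N) (L : List (G × N × N))
    (hinit : ∀ n g, σ₀.loc n g = σ₀.gt g)
    (hrun : Run σ₀ L σ) (n : N) :
    {g : G | σ.loc n g ≠ σ.gt g} ⊆
      {g : G | ∃ t ∈ L, t.1 = g ∧ t.2.1 ≠ n ∧ t.2.2 ≠ n} ∧
    ∀ g : G, (∀ t ∈ L, t.1 = g → t.2.1 = n ∨ t.2.2 = n) → σ.loc n g = σ.gt g := by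
  constructor
  · intro g hg
    by_contra hc
    simp only [Set.mem_setOf_eq] at hg hc
    push_neg at hc
    exact hg (key hrun n g (hinit n g) (fun t ht h1 => by
      by_cases hs : t.2.1 = n
      · exact Or.inl hs
      · exact Or.inr (hc t ht h1 hs)))
  · exact fun g h => key hrun n g (hinit n g) h
end

section
/- In the migration model extended with node addition and deletion (which change the node set but do not modify gt or loc on existing granule entries), the invariant 'loc n g = gt g whenever gt g = n' is preserved by every step, hence holds after any finite execution from a consistent initial state. -/
structure ClusterState (G N : Type*) where
  Active : Set N
  gt : G → N
  loc : N → G → N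

variable {G N : Type*}

/-- One step of the extended migration model: migration, add-node, or delete-node. -/
inductive ClusterStep [DecidableEq G] [DecidableEq N] :
    ClusterState G N → ClusterState G N → Prop
  | migrate (σ : ClusterState G N) (g : G) (s d : N)
      (hpre : σ.gt g = s) (hs : s ∈ σ.Active) (hd : d ∈ σ.Active) :
      ClusterStep σ
        { Active := σ.Active
          gt := Function.update σ.gt g d
          loc := fun n =>
            if n = s ∨ n = d then Function.update (σ.loc n) g d else σ.loc n }
  | addNode (σ : ClusterState G N) (n : N) (hn : n ∉ σ.Active) :
      ClusterStep σ
        { Active := σ.Active ∪ {n}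
          gt := σ.gt
          loc := Function.update σ.loc n σ.gt }
  | deleteNode (σ : ClusterState G N) (n : N) (hempty : ∀ g, σ.gt g ≠ n) :
      ClusterStep σ
        { Active := σ.Active \ {n}
          gt := σ.gt
          loc := σ.loc }

lemma step_preserves [DecidableEq G] [DecidableEq N] {σ τ : ClusterState G N}
    (hstep : ClusterStep σ τ)
    (hI : ∀ n ∈ σ.Active, ∀ g, σ.gt g = n → σ.loc n g = σ.gt g) :
    ∀ n ∈ τ.Active, ∀ g, τ.gt g = n → τ.loc n g = τ.gt g := by
  cases hstep with
  | migrate g s d hpre hs hd =>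
    intro n hn g' hg'
    simp only at hn hg' ⊢
    by_cases hgg : g' = g
    · subst hgg
      have hnd : n = d := by simpa [Function.update_self] using hg'.symm
      subst hnd
      simp [Function.update_self]
    · rw [Function.update_of_ne hgg] at hg' ⊢
      by_cases hcase : n = s ∨ n = d
      · simp only [if_pos hcase, Function.update_of_ne hgg]
        exact hI n hn g' hg'
      · simp only [if_neg hcase]
        exact hI n hn g' hg'
  | addNode m hm =>
    intro n hn g hg
    simp only at hn hg ⊢
    by_cases hnm : n = m
    · subst hnm
      simp [Function.update_self]
    · rw [Function.update_of_ne hnm]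
      rcases hn with hn | hn
      · exact hI n hn g hg
      · exact absurd hn hnm
  | deleteNode m hempty =>
    intro n hn g hg
    exact hI n hn.1 g hg

theorem invariant_preserved_extended {G N : Type*} [DecidableEq G] [DecidableEq N]
    (σ₀ σ : ClusterState G N)
    (hrange : ∀ g, σ₀.gt g ∈ σ₀.Active)
    (hinit : ∀ n ∈ σ₀.Active, ∀ g, σ₀.loc n g = σ₀.gt g)
    (hreach : Relation.ReflTransGen ClusterStep σ₀ σ) :
    ∀ n ∈ σ.Active, ∀ g, σ.gt g = n → σ.loc n g = σ.gt g := by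
  induction hreach with
  | refl => intro n hn g _; exact hinit n hn g
  | tail _ hstep ih => exact step_preserves hstep ih
end

section
/- In the migration model, define for each node n the error set E(n) = {g | loc n g ≠ gt g}. A migration step (g, s, d) can only change membership of granule g in the error sets, and after the step g ∉ E(s) and g ∉ E(d). Consequently, |E(n)| after a sequence of k migrations from a consistent initial state is at most the number of migrations in the sequence not involving n. -/
variable {G N : Type*} [DecidableEq G] [DecidableEq N]

/-- Error set of node n: granules where its local table disagrees with ground truth. -/
def errorSet {G N : Type*} (σ : MigState G N) (n : N) : Set G :=
  {g : G | σ.loc n g ≠ σ.gt g}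

lemma step_subset_notinv {G N : Type*} [DecidableEq G] [DecidableEq N]
    (σ : MigState G N) (g : G) (s d n : N) (hn : ¬ (n = s ∨ n = d)) :
    errorSet (applyMig g s d σ) n ⊆ errorSet σ n ∪ {g} := by
  intro x hx
  by_cases hxg : x = g
  · exact Or.inr hxg
  · left
    simp only [errorSet, applyMig, Set.mem_setOf_eq, if_neg hn,
      Function.update_of_ne hxg] at hx ⊢
    exact hx

lemma step_subset_inv {G N : Type*} [DecidableEq G] [DecidableEq N]
    (σ : MigState G N) (g : G) (s d n : N) (hn : n = s ∨ n = d) :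
    errorSet (applyMig g s d σ) n ⊆ errorSet σ n := by
  intro x hx
  by_cases hxg : x = g
  · subst hxg
    simp [errorSet, applyMig, if_pos hn] at hx
  · simp only [errorSet, applyMig, Set.mem_setOf_eq, if_pos hn,
      Function.update_of_ne hxg] at hx ⊢
    exact hx

lemma run_aux {G N : Type*} [DecidableEq G] [DecidableEq N] :
    ∀ (L : List (G × N × N)) (σ σ' : MigState G N), Run σ L σ' → ∀ (n : N) (F : Finset G),
      errorSet σ n ⊆ ↑F → ∃ F' : Finset G, errorSet σ' n ⊆ ↑F' ∧
        F'.card ≤ F.card + (L.filter (fun t => n ≠ t.2.1 ∧ n ≠ t.2.2)).length := by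
  intro L
  induction L with
  | nil =>
    intro σ σ' hr n F hF
    cases hr
    exact ⟨F, hF, by simp⟩
  | cons hd tl ih =>
    intro σ σ' hr n F hF
    cases hr with
    | cons hpre h =>
      rename_i g s d
      by_cases hn : n = s ∨ n = d
      · have hsub : errorSet (applyMig g s d σ) n ⊆ ↑F :=
          (step_subset_inv σ g s d n hn).trans hF
        obtain ⟨F', hF', hc⟩ := ih _ _ h n F hsub
        refine ⟨F', hF', hc.trans ?_⟩
        have : ¬ (n ≠ s ∧ n ≠ d) := by tauto
        simp [List.filter, this]
      · have hsub : errorSet (applyMig g s d σ) n ⊆ ↑(insert g F) := by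
          refine (step_subset_notinv σ g s d n hn).trans ?_
          intro x hx
          rcases hx with hx | hx
          · exact Finset.mem_coe.mpr (Finset.mem_insert_of_mem (hF hx))
          · simp only [Set.mem_singleton_iff] at hx
            simp [hx]
        obtain ⟨F', hF', hc⟩ := ih _ _ h n (insert g F) hsub
        refine ⟨F', hF', hc.trans ?_⟩
        have : (n ≠ s ∧ n ≠ d) := by tauto
        have hcard := Finset.card_insert_le g F
        rw [List.filter_cons_of_pos (by simp [this])]
        simp only [List.length_cons]
        omega

theorem error_set_card_bound {G N : Type*} [DecidableEq G] [DecidableEq N]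
    (σ₀ σ : MigState G N) (L : List (G × N × N))
    (hinit : ∀ n g, σ₀.loc n g = σ₀.gt g)
    (hrun : Run σ₀ L σ) (n : N) :
    (errorSet σ n).ncard ≤ (L.filter (fun t => n ≠ t.2.1 ∧ n ≠ t.2.2)).length := by
  have h0 : errorSet σ₀ n ⊆ ↑(∅ : Finset G) := by
    intro x hx
    exact absurd (hinit n x) hx
  obtain ⟨F', hF', hc⟩ := run_aux L σ₀ σ hrun n ∅ h0
  calc (errorSet σ n).ncard ≤ F'.card := by
        rw [← Set.ncard_coe_finset]
        exact Set.ncard_le_ncard hF' F'.finite_toSet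
    _ ≤ _ := by simpa using hc
end
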